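/- Let q ≥ 2 be an integer and let M be a simple rank-3 matroid with q² + q elements in which every line has q or q + 1 points and exactly q + 1 lines have q points. Then there is a projective plane N of order q and an element x of N such that M is isomorphic to N \ x. -/

import Mathlib

open Set Matroid
open scoped Matroid

namespace MatroidPaper

variable {α : Type*} {β : Type*}

/-- A circuit of a matroid is a minimal dependent set. -/
def Circuit (M : Matroid α) (C : Set α) : Prop := Minimal M.Dep C

/-- A set is cyclic if it is a union of circuits. -/
def Cyclic (M : Matroid α) (X : Set α) : Prop :=
  ∃ S : Set (Set α), (∀ C ∈ S, Circuit M C) ∧ X = ⋃₀ S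

/-- A cyclic flat is a flat that is a union of circuits. -/
def CyclicFlat (M : Matroid α) (F : Set α) : Prop := M.IsFlat F ∧ Cyclic M F

/-- The rank of a set in a matroid: the supremum of sizes of independent subsets. -/
noncomputable def rk (M : Matroid α) (X : Set α) : ℕ :=
  sSup {n | ∃ I, I ⊆ X ∧ M.Indep I ∧ I.ncard = n}

/-- `e` is a loop of `M`. -/
def Loop (M : Matroid α) (e : α) : Prop := M.Dep {e}

/-- `e` is a coloop of `M`, i.e. a loop of the dual. -/
def Coloop (M : Matroid α) (e : α) : Prop := M✶.Dep {e}

/-- Deletion of a set of elements. -/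
def delete (M : Matroid α) (D : Set α) : Matroid α := M ↾ (M.E \ D)

/-- Contraction of a set of elements. -/
def contract (M : Matroid α) (C : Set α) : Matroid α := (delete M✶ C)✶

open Classical in
/-- The Tutte polynomial of a (finite) matroid, as a polynomial in two
variables `X 0` (usually `x`) and `X 1` (usually `y`). -/
noncomputable def tutte (M : Matroid α) : MvPolynomial (Fin 2) ℤ :=
  if hE : M.E.Finite then
    ∑ A ∈ hE.toFinset.powerset,
      (MvPolynomial.X 0 - 1) ^ (rk M M.E - rk M ↑A) *
        (MvPolynomial.X 1 - 1) ^ (A.card - rk M ↑A)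
  else 0

/-- The coefficient of `x^i y^j` in the Tutte polynomial. -/
noncomputable def tcoeff (M : Matroid α) (i j : ℕ) : ℤ :=
  MvPolynomial.coeff (Finsupp.single 0 i + Finsupp.single 1 j) (tutte M)

/-- Matroid isomorphism. -/
def Iso (M : Matroid α) (N : Matroid β) : Prop :=
  ∃ (f : α → β) (hf : Set.InjOn f M.E), M.map f hf = N

/-- A matroid is connected if it is nonempty and every two distinct elements
lie in a common circuit. -/
def Connected (M : Matroid α) : Prop :=
  M.E.Nonempty ∧ ∀ ⦃e f⦄, e ∈ M.E → f ∈ M.E → e ≠ f →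
    ∃ C, Circuit M C ∧ e ∈ C ∧ f ∈ C

/-- The connected component of an element. -/
def component (M : Matroid α) (e : α) : Set α :=
  {f | f ∈ M.E ∧ Relation.ReflTransGen (fun x y => ∃ C, Circuit M C ∧ x ∈ C ∧ y ∈ C) e f}

/-- The number of connected components of a matroid. -/
noncomputable def numComponents (M : Matroid α) : ℕ :=
  Set.ncard {X : Set α | ∃ e ∈ M.E, X = component M e}

/-- A matroid is simple if all sets of at most two elements of the ground set
are independent. -/
def Simple (M : Matroid α) : Prop :=
  ∀ ⦃e f⦄, e ∈ M.E → f ∈ M.E → M.Indep {e, f}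

/-- A set of edges of a complete graph is a forest if no edge is a loop and
every nonempty subset uses more vertices than it has edges. -/
def IsForest {n : ℕ} (X : Set (Sym2 (Fin n))) : Prop :=
  (∀ e ∈ X, ¬ e.IsDiag) ∧
    ∀ Y ⊆ X, Y.Nonempty → Y.ncard < {v | ∃ e ∈ Y, v ∈ e}.ncard

/-- `M` is isomorphic to the cycle matroid of the complete graph `K n`. -/
def IsCycleMatroidK (M : Matroid α) (n : ℕ) : Prop :=
  ∃ f : α → Sym2 (Fin n), Set.BijOn f M.E {e | ¬ e.IsDiag} ∧
    ∀ I ⊆ M.E, (M.Indep I ↔ IsForest (f '' I))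


/-- A projective plane of order `q`: a simple rank-3 matroid on `q² + q + 1`
elements in which every line has `q + 1` points and every two distinct lines
meet. -/
def IsProjectivePlane (N : Matroid β) (q : ℕ) : Prop :=
  Simple N ∧ rk N N.E = 3 ∧ N.E.Finite ∧ N.E.ncard = q ^ 2 + q + 1 ∧
    (∀ L : Set β, N.IsFlat L → rk N L = 2 → L.ncard = q + 1) ∧
    (∀ L L' : Set β, N.IsFlat L → rk N L = 2 → N.IsFlat L' → rk N L' = 2 →
      L ≠ L' → (L ∩ L').Nonempty)
lemma closure_flat' (M : Matroid α) (X : Set α) : M.IsFlat (M.closure X) := by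
  rw [Matroid.closure_def, Set.sInter_eq_iInter]
  have hne : Nonempty ({F | M.IsFlat F ∧ X ∩ M.E ⊆ F} : Set (Set α)) :=
    ⟨⟨M.E, M.ground_isFlat, Set.inter_subset_right⟩⟩
  exact Matroid.IsFlat.iInter fun F => F.2.1
section Helpers

variable {M : Matroid α} {I J X F L L' : Set α} {a b : α}

lemma rk_set_nonempty (M : Matroid α) (X : Set α) :
    {n | ∃ I, I ⊆ X ∧ M.Indep I ∧ I.ncard = n}.Nonempty :=
  ⟨0, ∅, empty_subset X, M.empty_indep, Set.ncard_empty α⟩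

lemma rk_bddAbove (hE : M.E.Finite) (X : Set α) :
    BddAbove {n | ∃ I, I ⊆ X ∧ M.Indep I ∧ I.ncard = n} := by
  refine ⟨M.E.ncard, ?_⟩
  rintro n ⟨I, -, hI, rfl⟩
  exact Set.ncard_le_ncard hI.subset_ground hE

lemma le_rk_of_indep (hE : M.E.Finite) (hIX : I ⊆ X) (hI : M.Indep I) : I.ncard ≤ rk M X :=
  le_csSup (rk_bddAbove hE X) ⟨I, hIX, hI, rfl⟩

lemma rk_eq_ncard_of_basis (hE : M.E.Finite) (hB : M.IsBasis I X) : rk M X = I.ncard := by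
  refine le_antisymm (csSup_le (rk_set_nonempty M X) ?_) (le_rk_of_indep hE hB.subset hB.indep)
  rintro n ⟨J, hJX, hJ, rfl⟩
  obtain ⟨I', hI', hJI'⟩ := hJ.subset_isBasis_of_subset hJX hB.subset_ground
  have hfin : I'.Finite := hE.subset hI'.indep.subset_ground
  have hcc : I'.ncard = I.ncard := by
    rw [Set.ncard_def, Set.ncard_def, hI'.encard_eq_encard hB]
  exact (Set.ncard_le_ncard hJI' hfin).trans hcc.le

lemma exists_basis_ncard_rk (hE : M.E.Finite) (hX : X ⊆ M.E) :
    ∃ I, M.Indep I ∧ I ⊆ X ∧ I.ncard = rk M X ∧ M.IsBasis I X := by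
  obtain ⟨I, hI⟩ := M.exists_isBasis X hX
  exact ⟨I, hI.indep, hI.subset, (rk_eq_ncard_of_basis hE hI).symm, hI⟩

lemma indep_of_encard_le_two (hs : Simple M) (hXE : I ⊆ M.E) (h2 : I.encard ≤ 2) :
    M.Indep I := by
  rcases eq_or_ne I.encard 2 with h | h
  · obtain ⟨x, y, hxy, rfl⟩ := Set.encard_eq_two.1 h
    exact hs (hXE (by simp)) (hXE (by simp))
  rcases eq_or_ne I.encard 1 with h1 | h1
  · obtain ⟨x, rfl⟩ := Set.encard_eq_one.1 h1
    have := hs (e := x) (f := x) (hXE rfl) (hXE rfl)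
    rwa [Set.pair_eq_singleton] at this
  · have h0 : I.encard = 0 := by
      have : I.encard ≤ 1 := Order.le_of_lt_add_one (lt_of_le_of_ne h2 h)
      exact le_antisymm (Order.le_of_lt_add_one (lt_of_le_of_ne this h1)) zero_le
    rw [Set.encard_eq_zero.1 h0]
    exact M.empty_indep

/-- A line: a rank-2 flat. -/
def IsLine (M : Matroid α) (L : Set α) : Prop := M.IsFlat L ∧ rk M L = 2

lemma IsLine.subset_ground (hL : IsLine M L) : L ⊆ M.E := hL.1.subset_ground

lemma closure_pair_line (hE : M.E.Finite) (hab : M.Indep {a, b}) (hne : a ≠ b) :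
    IsLine M (M.closure {a, b}) :=
  ⟨closure_flat' M _, by rw [rk_eq_ncard_of_basis hE hab.isBasis_closure, Set.ncard_pair hne]⟩

lemma line_eq_closure_pair (hE : M.E.Finite) (hL : IsLine M L) (hab : M.Indep {a, b})
    (hne : a ≠ b) (ha : a ∈ L) (hb : b ∈ L) : L = M.closure {a, b} := by
  have hsub : {a, b} ⊆ L := by
    rintro x (rfl | rfl) <;> assumption
  obtain ⟨I', hI', hsubI'⟩ := hab.subset_isBasis_of_subset hsub hL.subset_ground
  have hIfin : I'.Finite := hE.subset hI'.indep.subset_ground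
  have hc2 : I'.ncard = 2 := by
    have h := rk_eq_ncard_of_basis hE hI'
    rw [hL.2] at h; omega
  have heq : {a, b} = I' :=
    Set.eq_of_subset_of_ncard_le hsubI' (by rw [Set.ncard_pair hne, hc2]) hIfin
  rw [← hL.1.closure, ← hI'.closure_eq_closure, ← heq]

lemma line_unique (hE : M.E.Finite) (hs : Simple M) (hL : IsLine M L) (hL' : IsLine M L')
    (hne : a ≠ b) (haL : a ∈ L) (hbL : b ∈ L) (haL' : a ∈ L') (hbL' : b ∈ L') : L = L' := by
  have ha : a ∈ M.E := hL.subset_ground haL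
  have hb : b ∈ M.E := hL.subset_ground hbL
  rw [line_eq_closure_pair hE hL (hs ha hb) hne haL hbL,
    line_eq_closure_pair hE hL' (hs ha hb) hne haL' hbL']

lemma exists_line_pair (hE : M.E.Finite) (hs : Simple M) (ha : a ∈ M.E) (hb : b ∈ M.E)
    (hne : a ≠ b) : ∃ L, IsLine M L ∧ a ∈ L ∧ b ∈ L := by
  have hp : ({a, b} : Set α) ⊆ M.E := by rintro x (rfl | rfl) <;> assumption
  exact ⟨M.closure {a, b}, closure_pair_line hE (hs ha hb) hne,
    M.mem_closure_of_mem (by simp) hp, M.mem_closure_of_mem (by simp) hp⟩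

lemma indep_three_iff_no_line (hE : M.E.Finite) (hs : Simple M) (hIE : I ⊆ M.E)
    (h3 : I.encard = 3) : M.Indep I ↔ ¬ ∃ L, IsLine M L ∧ I ⊆ L := by
  have hIfin : I.Finite := hE.subset hIE
  have hI3 : I.ncard = 3 := by rw [Set.ncard_def, h3]; rfl
  constructor
  · rintro hI ⟨L, hL, hIL⟩
    have := le_rk_of_indep hE hIL hI
    rw [hL.2, hI3] at this; omega
  · intro hno
    by_contra hdep
    obtain ⟨x, y, z, hxy, hxz, hyz, rfl⟩ := Set.encard_eq_three.1 h3
    have hx : x ∈ M.E := hIE (by simp)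
    have hy : y ∈ M.E := hIE (by simp)
    have hz : z ∈ M.E := hIE (by simp)
    have hxyI : M.Indep {x, y} := hs hx hy
    refine hno ⟨M.closure {x, y}, closure_pair_line hE hxyI hxy, ?_⟩
    have hpair : ({x, y} : Set α) ⊆ M.E := by rintro w (rfl | rfl) <;> assumption
    have hz_mem : z ∈ M.closure {x, y} := by
      rw [hxyI.mem_closure_iff]
      left
      rw [Matroid.dep_iff]
      refine ⟨fun hind => hdep (by rwa [show ({x,y,z} : Set α) = insert z {x,y} by
        ext w; simp [or_comm, or_left_comm]]), ?_⟩
      exact Set.insert_subset hz hpair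
    rintro w (rfl | rfl | rfl)
    · exact M.mem_closure_of_mem (by simp) hpair
    · exact M.mem_closure_of_mem (by simp) hpair
    · exact hz_mem

end Helpers
section Counting

variable {q : ℕ} {M : Matroid α} {p : α}

lemma point_count (hq : 2 ≤ q) (hE : M.E.Finite) (hs : Simple M)
    (hcard : M.E.ncard = q ^ 2 + q)
    (hlines : ∀ L : Set α, M.IsFlat L → rk M L = 2 → L.ncard = q ∨ L.ncard = q + 1)
    (hp : p ∈ M.E) :
    (q ^ 2 + q - 1) + {L | IsLine M L ∧ p ∈ L ∧ L.ncard = q}.ncard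
      = q * {L | IsLine M L ∧ p ∈ L}.ncard := by
  classical
  have hLfin : {L | IsLine M L ∧ p ∈ L}.Finite :=
    hE.finite_subsets.subset (fun L hL => hL.1.subset_ground)
  set t : Finset (Set α) := hLfin.toFinset with ht
  set sP : Finset α := hE.toFinset.erase p with hsP
  have hmap : ∀ x ∈ sP, M.closure {p, x} ∈ t := by
    intro x hx
    rw [hsP, Finset.mem_erase, Set.Finite.mem_toFinset] at hx
    obtain ⟨hxp, hxE⟩ := hx
    rw [ht, Set.Finite.mem_toFinset]
    have hpx : ({p, x} : Set α) ⊆ M.E := by rintro w (rfl | rfl) <;> assumption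
    exact ⟨closure_pair_line hE (hs hp hxE) (Ne.symm hxp),
      M.mem_closure_of_mem (by simp) hpx⟩
  have hsum := Finset.card_eq_sum_card_fiberwise hmap
  have hcardP : sP.card = q ^ 2 + q - 1 := by
    rw [hsP, Finset.card_erase_of_mem (by rwa [Set.Finite.mem_toFinset]),
      ← Set.ncard_eq_toFinset_card _ hE, hcard]
  have hfib : ∀ L ∈ t, (sP.filter (fun x => M.closure {p, x} = L)).card = L.ncard - 1 := by
    intro L hLt
    rw [ht, Set.Finite.mem_toFinset] at hLt
    obtain ⟨hline, hpL⟩ := hLt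
    have hLsfin : L.Finite := hE.subset hline.subset_ground
    have hdfin : (L \ {p}).Finite := hLsfin.diff
    have heq : sP.filter (fun x => M.closure {p, x} = L) = hdfin.toFinset := by
      ext x
      rw [Finset.mem_filter, Set.Finite.mem_toFinset, hsP, Finset.mem_erase,
        Set.Finite.mem_toFinset, Set.mem_diff, Set.mem_singleton_iff]
      constructor
      · rintro ⟨⟨hxp, hxE⟩, hcl⟩
        have hpx : ({p, x} : Set α) ⊆ M.E := by rintro w (rfl | rfl) <;> assumption
        exact ⟨hcl ▸ M.mem_closure_of_mem (by simp) hpx, hxp⟩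
      · rintro ⟨hxL, hxp⟩
        have hxE := hline.subset_ground hxL
        exact ⟨⟨hxp, hxE⟩,
          (line_eq_closure_pair hE hline (hs hp hxE) (Ne.symm hxp) hpL hxL).symm⟩
    rw [heq, ← Set.ncard_eq_toFinset_card _ hdfin,
      Set.ncard_diff_singleton_of_mem hpL]
  have hterm : ∀ L ∈ t, (L.ncard - 1) + (if L.ncard = q then 1 else 0) = q := by
    intro L hLt
    rw [ht, Set.Finite.mem_toFinset] at hLt
    rcases hlines L hLt.1.1 hLt.1.2 with h | h <;> simp [h] <;> omega
  have hshort : {L | IsLine M L ∧ p ∈ L ∧ L.ncard = q}.ncard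
      = (t.filter (fun L => L.ncard = q)).card := by
    have : {L | IsLine M L ∧ p ∈ L ∧ L.ncard = q} = ↑(t.filter (fun L => L.ncard = q)) := by
      ext L
      simp only [Finset.coe_filter, Set.mem_setOf_eq, ht, Set.Finite.mem_toFinset]
      tauto
    rw [this, Set.ncard_coe_finset]
  have hk : {L | IsLine M L ∧ p ∈ L}.ncard = t.card := Set.ncard_eq_toFinset_card _ hLfin
  rw [hshort, hk, ← hcardP]
  calc sP.card + (t.filter (fun L => L.ncard = q)).card
      = (∑ L ∈ t, (sP.filter (fun x => M.closure {p, x} = L)).card)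
        + ∑ L ∈ t, (if L.ncard = q then 1 else 0) := by
        rw [← hsum, Finset.card_filter]
    _ = ∑ L ∈ t, ((L.ncard - 1) + (if L.ncard = q then 1 else 0)) := by
        rw [← Finset.sum_add_distrib]
        exact Finset.sum_congr rfl (fun L hLt => by rw [hfib L hLt])
    _ = ∑ L ∈ t, q := Finset.sum_congr rfl hterm
    _ = q * t.card := by rw [Finset.sum_const, smul_eq_mul, mul_comm]

end Counting
section Counting2

variable {q : ℕ} {M : Matroid α} {p : α} {L L1 L2 : Set α}

lemma short_ge_one (hq : 2 ≤ q) (hE : M.E.Finite) (hs : Simple M)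
    (hcard : M.E.ncard = q ^ 2 + q)
    (hlines : ∀ L : Set α, M.IsFlat L → rk M L = 2 → L.ncard = q ∨ L.ncard = q + 1)
    (hp : p ∈ M.E) : 1 ≤ {L | IsLine M L ∧ p ∈ L ∧ L.ncard = q}.ncard := by
  have hid := point_count hq hE hs hcard hlines hp
  set s := {L | IsLine M L ∧ p ∈ L ∧ L.ncard = q}.ncard
  set k := {L | IsLine M L ∧ p ∈ L}.ncard
  by_contra hcon
  have hs0 : s = 0 := by omega
  rw [hs0, add_zero] at hid
  have hqq : q ^ 2 = q * q := sq q
  rcases le_or_gt k q with h | h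
  · have := Nat.mul_le_mul_left q h
    omega
  · have : q * (q + 1) ≤ q * k := Nat.mul_le_mul_left q h
    have hmul : q * (q + 1) = q * q + q := by ring
    omega

lemma short_unique (hq : 2 ≤ q) (hE : M.E.Finite) (hs : Simple M)
    (hcard : M.E.ncard = q ^ 2 + q)
    (hlines : ∀ L : Set α, M.IsFlat L → rk M L = 2 → L.ncard = q ∨ L.ncard = q + 1)
    (hq1 : Set.ncard {L : Set α | M.IsFlat L ∧ rk M L = 2 ∧ L.ncard = q} = q + 1) :
    ∀ p ∈ M.E, {L | IsLine M L ∧ p ∈ L ∧ L.ncard = q}.ncard = 1 := by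
  classical
  have hq1' : {L : Set α | IsLine M L ∧ L.ncard = q}.ncard = q + 1 := by
    rw [show {L : Set α | IsLine M L ∧ L.ncard = q}
      = {L : Set α | M.IsFlat L ∧ rk M L = 2 ∧ L.ncard = q} by
        ext L; simp [IsLine, and_assoc]]
    exact hq1
  have hshortsFin : {L : Set α | IsLine M L ∧ L.ncard = q}.Finite :=
    hE.finite_subsets.subset (fun L hL => hL.1.subset_ground)
  by_contra hcon
  push_neg at hcon
  obtain ⟨p, hp, hpne⟩ := hcon
  have hid := point_count hq hE hs hcard hlines hp
  have hge1 := short_ge_one hq hE hs hcard hlines hp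
  have hsub : {L | IsLine M L ∧ p ∈ L ∧ L.ncard = q} ⊆ {L | IsLine M L ∧ L.ncard = q} :=
    fun L hL => ⟨hL.1, hL.2.2⟩
  have hle : {L | IsLine M L ∧ p ∈ L ∧ L.ncard = q}.ncard ≤ q + 1 := by
    rw [← hq1']
    exact Set.ncard_le_ncard hsub hshortsFin
  -- s p = q + 1
  have hseq : {L | IsLine M L ∧ p ∈ L ∧ L.ncard = q}.ncard = q + 1 := by
    set s := {L | IsLine M L ∧ p ∈ L ∧ L.ncard = q}.ncard
    set k := {L | IsLine M L ∧ p ∈ L}.ncard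
    have hs2 : 2 ≤ s := by omega
    have hqq : q ^ 2 = q * q := sq q
    have hk : q + 2 ≤ k := by
      by_contra hcon2
      have hk1 : k ≤ q + 1 := by omega
      have := Nat.mul_le_mul_left q hk1
      have hmul : q * (q + 1) = q * q + q := by ring
      omega
    have := Nat.mul_le_mul_left q hk
    have hmul : q * (q + 2) = q * q + 2 * q := by ring
    omega
  have hall : {L | IsLine M L ∧ p ∈ L ∧ L.ncard = q} = {L | IsLine M L ∧ L.ncard = q} :=
    Set.eq_of_subset_of_ncard_le hsub (by omega) hshortsFin
  have hallp : ∀ L, IsLine M L → L.ncard = q → p ∈ L := by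
    intro L hL hLq
    have : L ∈ {L | IsLine M L ∧ p ∈ L ∧ L.ncard = q} := hall ▸ ⟨hL, hLq⟩
    exact this.2.1
  -- find a point outside all short lines
  set T : Finset (Set α) := hshortsFin.toFinset with hT
  have hTcard : T.card = q + 1 := by
    rw [hT, ← Set.ncard_eq_toFinset_card _ hshortsFin, hq1']
  set g : Set α → Finset α := fun L => (hE.toFinset.filter (· ∈ L)).erase p with hg
  have hgcard : ∀ L ∈ T, (g L).card ≤ q - 1 := by
    intro L hLT
    rw [hT, Set.Finite.mem_toFinset] at hLT
    have hfl : hE.toFinset.filter (· ∈ L) = (hE.subset hLT.1.subset_ground).toFinset := by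
      ext x
      simp only [Finset.mem_filter, Set.Finite.mem_toFinset]
      exact ⟨fun h => h.2, fun h => ⟨hLT.1.subset_ground h, h⟩⟩
    rw [hg]
    simp only
    rw [Finset.card_erase_of_mem, hfl, ← Set.ncard_eq_toFinset_card _ _, hLT.2]
    rw [hfl, Set.Finite.mem_toFinset]
    exact hallp L hLT.1 hLT.2
  have h1 : (T.biUnion g).card ≤ (q + 1) * (q - 1) := by
      calc (T.biUnion g).card ≤ ∑ L ∈ T, (g L).card := Finset.card_biUnion_le
        _ ≤ ∑ _L ∈ T, (q - 1) := Finset.sum_le_sum hgcard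
        _ = (q + 1) * (q - 1) := by rw [Finset.sum_const, smul_eq_mul, hTcard]
  have hCcard : (insert p (T.biUnion g)).card ≤ q ^ 2 := by
    have h2 := Finset.card_insert_le p (T.biUnion g)
    obtain ⟨m, rfl⟩ : ∃ m, q = m + 2 := ⟨q - 2, by omega⟩
    have e1 : (m + 2 + 1) * (m + 2 - 1) = m * m + 4 * m + 3 := by
      have h : m + 2 - 1 = m + 1 := by omega
      rw [h]; ring
    have e2 : (m + 2) ^ 2 = m * m + 4 * m + 4 := by ring
    omega
  have hEcard : hE.toFinset.card = q ^ 2 + q := by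
    rw [← Set.ncard_eq_toFinset_card _ hE, hcard]
  have hex : ∃ p', p' ∈ hE.toFinset ∧ p' ∉ insert p (T.biUnion g) := by
    by_contra hcon2
    push_neg at hcon2
    have := Finset.card_le_card (fun x hx => hcon2 x hx)
    omega
  obtain ⟨p', hp'E, hp'C⟩ := hex
  rw [Set.Finite.mem_toFinset] at hp'E
  have hnone : {L | IsLine M L ∧ p' ∈ L ∧ L.ncard = q}.ncard = 0 := by
    have hfin' : {L : Set α | IsLine M L ∧ p' ∈ L ∧ L.ncard = q}.Finite :=
      Set.Finite.subset hE.finite_subsets (fun L hL => hL.1.subset_ground)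
    rw [Set.ncard_eq_zero hfin']
    ext L
    simp only [Set.mem_setOf_eq, Set.mem_empty_iff_false, iff_false]
    rintro ⟨hL, hpL, hLq⟩
    apply hp'C
    rw [Finset.mem_insert]
    right
    rw [Finset.mem_biUnion]
    refine ⟨L, by rw [hT, Set.Finite.mem_toFinset]; exact ⟨hL, hLq⟩, ?_⟩
    rw [hg]
    simp only [Finset.mem_erase, Finset.mem_filter, Set.Finite.mem_toFinset]
    have hp'p : p' ≠ p := by
      rintro rfl
      exact hp'C (Finset.mem_insert_self _ _)
    exact ⟨hp'p, hL.subset_ground hpL, hpL⟩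
  have := short_ge_one hq hE hs hcard hlines hp'E
  omega

end Counting2
section Counting3

variable {q : ℕ} {M : Matroid α} {p : α} {L L1 L2 : Set α}

lemma lines_through_point (hq : 2 ≤ q) (hE : M.E.Finite) (hs : Simple M)
    (hcard : M.E.ncard = q ^ 2 + q)
    (hlines : ∀ L : Set α, M.IsFlat L → rk M L = 2 → L.ncard = q ∨ L.ncard = q + 1)
    (hq1 : Set.ncard {L : Set α | M.IsFlat L ∧ rk M L = 2 ∧ L.ncard = q} = q + 1)
    (hp : p ∈ M.E) : {L | IsLine M L ∧ p ∈ L}.ncard = q + 1 := by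
  have hid := point_count hq hE hs hcard hlines hp
  have h1 := short_unique hq hE hs hcard hlines hq1 p hp
  rw [h1] at hid
  have hqq : q ^ 2 = q * q := sq q
  have hmul : q * (q + 1) = q * q + q := by ring
  have heq : q * {L | IsLine M L ∧ p ∈ L}.ncard = q * (q + 1) := by omega
  exact Nat.eq_of_mul_eq_mul_left (by omega) heq

lemma exists_unique_short (hq : 2 ≤ q) (hE : M.E.Finite) (hs : Simple M)
    (hcard : M.E.ncard = q ^ 2 + q)
    (hlines : ∀ L : Set α, M.IsFlat L → rk M L = 2 → L.ncard = q ∨ L.ncard = q + 1)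
    (hq1 : Set.ncard {L : Set α | M.IsFlat L ∧ rk M L = 2 ∧ L.ncard = q} = q + 1)
    (hp : p ∈ M.E) : ∃! L, IsLine M L ∧ p ∈ L ∧ L.ncard = q := by
  obtain ⟨L0, hL0⟩ := Set.ncard_eq_one.1 (short_unique hq hE hs hcard hlines hq1 p hp)
  refine ⟨L0, ?_, ?_⟩
  · have : L0 ∈ {L | IsLine M L ∧ p ∈ L ∧ L.ncard = q} := hL0 ▸ rfl
    exact this
  · intro L hL
    have : L ∈ {L | IsLine M L ∧ p ∈ L ∧ L.ncard = q} := hL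
    rwa [hL0, Set.mem_singleton_iff] at this

lemma lines_meet (hq : 2 ≤ q) (hE : M.E.Finite) (hs : Simple M)
    (hcard : M.E.ncard = q ^ 2 + q)
    (hlines : ∀ L : Set α, M.IsFlat L → rk M L = 2 → L.ncard = q ∨ L.ncard = q + 1)
    (hq1 : Set.ncard {L : Set α | M.IsFlat L ∧ rk M L = 2 ∧ L.ncard = q} = q + 1)
    (hL1 : IsLine M L1) (h1 : L1.ncard = q + 1) (hL2 : IsLine M L2) (hne : L1 ≠ L2) :
    (L1 ∩ L2).Nonempty := by
  by_contra hcon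
  rw [Set.not_nonempty_iff_eq_empty] at hcon
  have hdisj : ∀ x, x ∈ L1 → x ∈ L2 → False := fun x h1x h2x =>
    (Set.eq_empty_iff_forall_notMem.1 hcon x) ⟨h1x, h2x⟩
  have hL2ne : L2.Nonempty := by
    rcases hlines L2 hL2.1 hL2.2 with h | h
    · exact Set.nonempty_of_ncard_ne_zero (by omega)
    · exact Set.nonempty_of_ncard_ne_zero (by omega)
  obtain ⟨p, hpL2⟩ := hL2ne
  have hpE : p ∈ M.E := hL2.subset_ground hpL2
  have hpL1 : p ∉ L1 := fun h => hdisj p h hpL2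
  have hLfin : {L | IsLine M L ∧ p ∈ L}.Finite :=
    hE.finite_subsets.subset (fun L hL => hL.1.subset_ground)
  have hkp := lines_through_point hq hE hs hcard hlines hq1 hpE
  set f : α → Set α := fun x => M.closure {p, x} with hf
  have hmem : ∀ x ∈ L1, f x ∈ {L | IsLine M L ∧ p ∈ L} := by
    intro x hx
    have hxE := hL1.subset_ground hx
    have hpx : p ≠ x := fun h => hpL1 (h ▸ hx)
    have hsubpx : ({p, x} : Set α) ⊆ M.E := by rintro w (rfl | rfl) <;> assumption
    exact ⟨closure_pair_line hE (hs hpE hxE) hpx, M.mem_closure_of_mem (by simp) hsubpx⟩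
  have hinj : Set.InjOn f L1 := by
    intro x hx y hy hxy
    by_contra hne'
    have hxE := hL1.subset_ground hx
    have hyE := hL1.subset_ground hy
    have hpx : p ≠ x := fun h => hpL1 (h ▸ hx)
    have hpy : p ≠ y := fun h => hpL1 (h ▸ hy)
    have hsubpx : ({p, x} : Set α) ⊆ M.E := by rintro w (rfl | rfl) <;> assumption
    have hsubpy : ({p, y} : Set α) ⊆ M.E := by rintro w (rfl | rfl) <;> assumption
    have hlx : IsLine M (f x) := (hmem x hx).1
    have hxmem : x ∈ f x := M.mem_closure_of_mem (by simp) hsubpx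
    have hymem : y ∈ f x := by rw [hxy]; exact M.mem_closure_of_mem (by simp) hsubpy
    have hfeq : f x = L1 := line_unique hE hs hlx hL1 hne' hxmem hymem hx hy
    exact hpL1 (hfeq ▸ M.mem_closure_of_mem (by simp) hsubpx)
  have him : (f '' L1) ⊆ {L | IsLine M L ∧ p ∈ L} := by
    rintro K ⟨x, hx, rfl⟩; exact hmem x hx
  have himcard : (f '' L1).ncard = q + 1 := by rw [Set.ncard_image_of_injOn hinj, h1]
  have heq : f '' L1 = {L | IsLine M L ∧ p ∈ L} :=
    Set.eq_of_subset_of_ncard_le him (by omega) hLfin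
  have hL2mem : L2 ∈ f '' L1 := heq ▸ (⟨hL2, hpL2⟩ : L2 ∈ {L | IsLine M L ∧ p ∈ L})
  obtain ⟨x, hx, hfx⟩ := hL2mem
  have hxE := hL1.subset_ground hx
  have hpx : p ≠ x := fun h => hpL1 (h ▸ hx)
  have hsubpx : ({p, x} : Set α) ⊆ M.E := by rintro w (rfl | rfl) <;> assumption
  exact hdisj x hx (hfx ▸ M.mem_closure_of_mem (by simp) hsubpx)

end Counting3
/-- a simple rank-3 matroid with `q² + q` elements, all lines of
`q` or `q + 1` points, and exactly `q + 1` lines of `q` points, is a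
single-element deletion of a projective plane of order `q`. -/
theorem eq_projPlane_delete (q : ℕ) (hq : 2 ≤ q) (M : Matroid α) (hE : M.E.Finite)
    (hs : Simple M) (hrk : rk M M.E = 3) (hcard : M.E.ncard = q ^ 2 + q)
    (hlines : ∀ L : Set α, M.IsFlat L → rk M L = 2 → L.ncard = q ∨ L.ncard = q + 1)
    (hq1 : Set.ncard {L : Set α | M.IsFlat L ∧ rk M L = 2 ∧ L.ncard = q} = q + 1) :
    ∃ (N : Matroid (Option α)) (x : Option α), IsProjectivePlane N q ∧ x ∈ N.E ∧
      Iso M (delete N {x}) := by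
  classical
  have hshortu : ∀ p ∈ M.E, ∃! L, IsLine M L ∧ p ∈ L ∧ L.ncard = q :=
    fun p hp => exists_unique_short hq hE hs hcard hlines hq1 hp
  set EN : Set (Option α) := insert none (some '' M.E) with hEN
  have hENfin : EN.Finite := (hE.image _).insert _
  have hmemEN : ∀ u, u ∈ EN ↔ u = none ∨ ∃ a ∈ M.E, u = some a := by
    intro u
    rw [hEN]
    simp only [Set.mem_insert_iff, Set.mem_image]
    constructor
    · rintro (rfl | ⟨a, ha, rfl⟩)
      · exact Or.inl rfl
      · exact Or.inr ⟨a, ha, rfl⟩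
    · rintro (rfl | ⟨a, ha, rfl⟩)
      · exact Or.inl rfl
      · exact Or.inr ⟨a, ha, rfl⟩
  set LinesN : Set (Set (Option α)) :=
    {K | ∃ L, IsLine M L ∧ ((L.ncard = q + 1 ∧ K = some '' L) ∨
      (L.ncard = q ∧ K = insert none (some '' L)))} with hLN
  have hKsub : ∀ K ∈ LinesN, K ⊆ EN := by
    rintro K ⟨L, hL, (⟨hc, rfl⟩ | ⟨hc, rfl⟩)⟩
    · exact (Set.image_mono hL.subset_ground).trans (Set.subset_insert _ _)
    · exact Set.insert_subset_insert (Set.image_mono hL.subset_ground)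
  have hKcard : ∀ K ∈ LinesN, K.ncard = q + 1 := by
    rintro K ⟨L, hL, (⟨hc, rfl⟩ | ⟨hc, rfl⟩)⟩
    · rw [Set.ncard_image_of_injective _ (Option.some_injective α), hc]
    · rw [Set.ncard_insert_of_notMem (by simp) ((hE.subset hL.subset_ground).image _),
        Set.ncard_image_of_injective _ (Option.some_injective α), hc]
  have hsome_mem : ∀ (L : Set α) (c : α), some c ∈ (some '' L) → c ∈ L := by
    intro L c hc
    simpa using hc
  have hsome_mem' : ∀ (L : Set α) (c : α), some c ∈ insert none (some '' L) → c ∈ L := by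
    intro L c hc
    simpa using hc
  have hP2ss : ∀ a ∈ M.E, ∀ b ∈ M.E, a ≠ b →
      ∃! K, K ∈ LinesN ∧ some a ∈ K ∧ some b ∈ K := by
    intro a ha b hb hab
    obtain ⟨L0, hL0, haL0, hbL0⟩ := exists_line_pair hE hs ha hb hab
    have hex : ∃ K, K ∈ LinesN ∧ some a ∈ K ∧ some b ∈ K := by
      rcases hlines L0 hL0.1 hL0.2 with hc | hc
      · exact ⟨insert none (some '' L0), ⟨L0, hL0, Or.inr ⟨hc, rfl⟩⟩,
          Set.mem_insert_of_mem _ ⟨a, haL0, rfl⟩, Set.mem_insert_of_mem _ ⟨b, hbL0, rfl⟩⟩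
      · exact ⟨some '' L0, ⟨L0, hL0, Or.inl ⟨hc, rfl⟩⟩, ⟨a, haL0, rfl⟩, ⟨b, hbL0, rfl⟩⟩
    obtain ⟨K0, hK0⟩ := hex
    have hpair : ∀ K K', (K ∈ LinesN ∧ some a ∈ K ∧ some b ∈ K) →
        (K' ∈ LinesN ∧ some a ∈ K' ∧ some b ∈ K') → K = K' := by
      rintro K K' ⟨⟨L, hL, hcase⟩, haK, hbK⟩ ⟨⟨L', hL', hcase'⟩, haK', hbK'⟩
      have haL : a ∈ L := by
        rcases hcase with ⟨_, rfl⟩ | ⟨_, rfl⟩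
        exacts [hsome_mem _ _ haK, hsome_mem' _ _ haK]
      have hbL : b ∈ L := by
        rcases hcase with ⟨_, rfl⟩ | ⟨_, rfl⟩
        exacts [hsome_mem _ _ hbK, hsome_mem' _ _ hbK]
      have haL' : a ∈ L' := by
        rcases hcase' with ⟨_, rfl⟩ | ⟨_, rfl⟩
        exacts [hsome_mem _ _ haK', hsome_mem' _ _ haK']
      have hbL' : b ∈ L' := by
        rcases hcase' with ⟨_, rfl⟩ | ⟨_, rfl⟩
        exacts [hsome_mem _ _ hbK', hsome_mem' _ _ hbK']
      have hLL' : L = L' := line_unique hE hs hL hL' hab haL hbL haL' hbL'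
      subst hLL'
      rcases hcase with ⟨hc, rfl⟩ | ⟨hc, rfl⟩ <;> rcases hcase' with ⟨hc', rfl⟩ | ⟨hc', rfl⟩
      · rfl
      · omega
      · omega
      · rfl
    exact ⟨K0, hK0, fun K hK => hpair K K0 hK hK0⟩
  have hP2sn : ∀ a ∈ M.E, ∃! K, K ∈ LinesN ∧ some a ∈ K ∧ none ∈ K := by
    intro a ha
    obtain ⟨S, ⟨hS, haS, hSq⟩, hSuniq⟩ := hshortu a ha
    refine ⟨insert none (some '' S), ⟨⟨S, hS, Or.inr ⟨hSq, rfl⟩⟩,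
      Set.mem_insert_of_mem _ ⟨a, haS, rfl⟩, Set.mem_insert _ _⟩, ?_⟩
    rintro K ⟨⟨L, hL, hcase⟩, haK, hnK⟩
    rcases hcase with ⟨hc, rfl⟩ | ⟨hc, rfl⟩
    · exact absurd hnK (by simp)
    · have haL : a ∈ L := hsome_mem' _ _ haK
      rw [hSuniq L ⟨hL, haL, hc⟩]
  have hP2 : ∀ u v, u ∈ EN → v ∈ EN → u ≠ v → ∃! K, K ∈ LinesN ∧ u ∈ K ∧ v ∈ K := by
    intro u v hu hv huv
    rcases (hmemEN u).1 hu with rfl | ⟨a, ha, rfl⟩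
    · rcases (hmemEN v).1 hv with rfl | ⟨b, hb, rfl⟩
      · exact absurd rfl huv
      · obtain ⟨K, ⟨h1, h2, h3⟩, hun⟩ := hP2sn b hb
        exact ⟨K, ⟨h1, h3, h2⟩, fun K' ⟨h1', h2', h3'⟩ => hun K' ⟨h1', h3', h2'⟩⟩
    · rcases (hmemEN v).1 hv with rfl | ⟨b, hb, rfl⟩
      · exact hP2sn a ha
      · exact hP2ss a ha b hb (fun h => huv (by rw [h]))
  have hmeet : ∀ K ∈ LinesN, ∀ K' ∈ LinesN, K ≠ K' → (K ∩ K').Nonempty := by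
    rintro K ⟨L, hL, hcase⟩ K' ⟨L', hL', hcase'⟩ hKK'
    rcases hcase with ⟨hc, rfl⟩ | ⟨hc, rfl⟩ <;> rcases hcase' with ⟨hc', rfl⟩ | ⟨hc', rfl⟩
    · have hne : L ≠ L' := fun h => hKK' (by rw [h])
      obtain ⟨x, hx⟩ := lines_meet hq hE hs hcard hlines hq1 hL hc hL' hne
      exact ⟨some x, ⟨x, hx.1, rfl⟩, ⟨x, hx.2, rfl⟩⟩
    · have hne : L ≠ L' := by rintro rfl; omega
      obtain ⟨x, hx⟩ := lines_meet hq hE hs hcard hlines hq1 hL hc hL' hne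
      exact ⟨some x, ⟨x, hx.1, rfl⟩, Set.mem_insert_of_mem _ ⟨x, hx.2, rfl⟩⟩
    · have hne : L' ≠ L := by rintro rfl; omega
      obtain ⟨x, hx⟩ := lines_meet hq hE hs hcard hlines hq1 hL' hc' hL hne
      exact ⟨some x, Set.mem_insert_of_mem _ ⟨x, hx.2, rfl⟩, ⟨x, hx.1, rfl⟩⟩
    · exact ⟨none, Set.mem_insert _ _, Set.mem_insert _ _⟩
  set IndN : Set (Option α) → Prop :=
    fun I => I ⊆ EN ∧ I.encard ≤ 3 ∧ ∀ K ∈ LinesN, I ⊆ K → I.encard ≤ 2 with hIndN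
  have hempty : IndN ∅ := ⟨Set.empty_subset _, by simp, fun K _ _ => by simp⟩
  have hsubsetI : ∀ ⦃I J⦄, IndN J → I ⊆ J → IndN I := by
    rintro I J ⟨hJE, hJ3, hJK⟩ hIJ
    refine ⟨hIJ.trans hJE, (Set.encard_mono hIJ).trans hJ3, fun K hK hIK => ?_⟩
    by_contra h2
    have hge : (2 : ℕ∞) + 1 ≤ I.encard := Order.add_one_le_of_lt (not_le.1 h2)
    have h23 : (2 : ℕ∞) + 1 = 3 := by norm_num
    rw [h23] at hge
    have h3 : I.encard = 3 := le_antisymm ((Set.encard_mono hIJ).trans hJ3) hge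
    have hIJ' : I = J := (hENfin.subset (hIJ.trans hJE)).eq_of_subset_of_encard_le hIJ
      (by rw [h3]; exact hJ3)
    have hJsubK : J ⊆ K := by rw [← hIJ']; exact hIK
    have := hJK K hK hJsubK
    rw [← hIJ'] at this
    exact h2 this
  have haug : ∀ ⦃I J⦄, IndN I → IndN J → I.ncard < J.ncard →
      ∃ e ∈ J, e ∉ I ∧ IndN (insert e I) := by
    rintro I J ⟨hIE, hI3, hIK⟩ ⟨hJE, hJ3, hJK⟩ hlt
    have hIfin : I.Finite := hENfin.subset hIE
    have hJfin : J.Finite := hENfin.subset hJE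
    have hIenc : I.encard = ↑I.ncard := hIfin.cast_ncard_eq.symm
    have hJenc : J.encard = ↑J.ncard := hJfin.cast_ncard_eq.symm
    have hJn3 : J.ncard ≤ 3 := by
      have h := hJ3
      rw [hJenc] at h
      exact_mod_cast h
    rcases le_or_gt I.ncard 1 with hI1 | hI2
    · obtain ⟨e, heJ, heI⟩ := Set.exists_mem_notMem_of_ncard_lt_ncard hlt hIfin
      have hcard2 : (insert e I).encard ≤ 2 := by
        rw [Set.encard_insert_of_notMem heI, hIenc]
        have h1 : (I.ncard : ℕ∞) ≤ 1 := by exact_mod_cast hI1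
        calc (I.ncard : ℕ∞) + 1 ≤ 1 + 1 := add_le_add_left h1 1
          _ = 2 := by norm_num
      exact ⟨e, heJ, heI, Set.insert_subset (hJE heJ) hIE,
        hcard2.trans (by norm_num), fun K _ _ => hcard2⟩
    · have hIn2 : I.ncard = 2 := by omega
      have hJn : J.ncard = 3 := by omega
      obtain ⟨u, v, huv, hIuv⟩ := Set.ncard_eq_two.1 hIn2
      have hJenc3 : J.encard = 3 := by rw [hJenc, hJn]; rfl
      have huI : u ∈ I := by rw [hIuv]; simp
      have hvI : v ∈ I := by rw [hIuv]; simp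
      have hu : u ∈ EN := hIE huI
      have hv : v ∈ EN := hIE hvI
      obtain ⟨K0, hK0, hK0uniq⟩ := hP2 u v hu hv huv
      have hJnotsub : ¬ J ⊆ K0 := by
        intro hsubK
        have h := hJK K0 hK0.1 hsubK
        rw [hJenc3] at h
        norm_num at h
      obtain ⟨e, heJ, heK0⟩ := Set.not_subset.1 hJnotsub
      have heI : e ∉ I := by
        intro h
        rw [hIuv] at h
        rcases h with rfl | rfl
        exacts [heK0 hK0.2.1, heK0 hK0.2.2]
      have henc3 : (insert e I).encard = 3 := by
        rw [Set.encard_insert_of_notMem heI, hIenc, hIn2]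
        rfl
      refine ⟨e, heJ, heI, Set.insert_subset (hJE heJ) hIE, by rw [henc3], ?_⟩
      intro K hK hsubK
      exfalso
      have hKeq : K = K0 := hK0uniq K ⟨hK, hsubK (Set.mem_insert_of_mem _ huI),
        hsubK (Set.mem_insert_of_mem _ hvI)⟩
      exact heK0 (hKeq ▸ hsubK (Set.mem_insert _ _))
  set N : Matroid (Option α) :=
    (IndepMatroid.ofFinite hENfin IndN hempty hsubsetI haug (fun I h => h.1)).matroid
    with hNdef
  have hNE : N.E = EN := rfl
  have hNInd : ∀ {I : Set (Option α)}, N.Indep I ↔ IndN I := fun {I} => Iff.rfl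
  have hNfin : N.E.Finite := hENfin
  have hNsimple : Simple N := by
    intro e f he hf
    have hcard2 : ({e, f} : Set (Option α)).encard ≤ 2 := by
      apply (Set.encard_insert_le _ _).trans
      rw [Set.encard_singleton]
      norm_num
    exact hNInd.2 ⟨Set.pair_subset he hf, hcard2.trans (by norm_num), fun K _ _ => hcard2⟩
  obtain ⟨B, hBind, hBsub, hBcard, hB⟩ := exists_basis_ncard_rk hE (subset_refl M.E)
  rw [hrk] at hBcard
  have hBfin : B.Finite := hE.subset hBind.subset_ground
  have hBENind : IndN (some '' B) := by
    have hencB : (some '' B).encard = 3 := by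
      rw [(Option.some_injective α).encard_image _, ← hBfin.cast_ncard_eq,
        hBcard]
      rfl
    refine ⟨(Set.image_mono hBind.subset_ground).trans (Set.subset_insert _ _),
      by rw [hencB], fun K hK hsubK => ?_⟩
    exfalso
    obtain ⟨L, hL, hcase⟩ := hK
    have hBL : B ⊆ L := by
      intro x hx
      rcases hcase with ⟨_, rfl⟩ | ⟨_, rfl⟩
      · exact hsome_mem _ _ (hsubK ⟨x, hx, rfl⟩)
      · exact hsome_mem' _ _ (hsubK ⟨x, hx, rfl⟩)
    have := le_rk_of_indep hE hBL hBind
    rw [hL.2, hBcard] at this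
    omega
  have hrkN : rk N N.E = 3 := by
    apply le_antisymm
    · apply csSup_le (rk_set_nonempty _ _)
      rintro n ⟨I, hIsub, hIind, rfl⟩
      have h3 : I.encard ≤ 3 := (hNInd.1 hIind).2.1
      rw [Set.ncard_def]
      exact ENat.toNat_le_of_le_coe (by exact_mod_cast h3)
    · have hle := le_rk_of_indep (show N.E.Finite from hENfin)
        (show some '' B ⊆ N.E from (Set.image_mono hBind.subset_ground).trans
          (Set.subset_insert _ _)) (hNInd.2 hBENind)
      rwa [Set.ncard_image_of_injective _ (Option.some_injective α), hBcard] at hle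
  have hNcard : N.E.ncard = q ^ 2 + q + 1 := by
    show EN.ncard = _
    rw [hEN, Set.ncard_insert_of_notMem (by simp) (hE.image _),
      Set.ncard_image_of_injective _ (Option.some_injective α), hcard]
  have hclosure_pair : ∀ u v, u ∈ EN → v ∈ EN → u ≠ v → ∀ K,
      (K ∈ LinesN ∧ u ∈ K ∧ v ∈ K) → N.closure {u, v} = K := by
    intro u v hu hv huv K hK
    obtain ⟨K0, hK0, huniq⟩ := hP2 u v hu hv huv
    have hKK0 : K = K0 := huniq K hK
    have hpairind : N.Indep {u, v} := hNsimple (show u ∈ N.E from hu) (show v ∈ N.E from hv)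
    ext x
    rw [hpairind.mem_closure_iff]
    constructor
    · rintro (hdep | hx)
      · have hxE : x ∈ EN := hdep.subset_ground (Set.mem_insert _ _)
        have hnind : ¬ N.Indep (insert x {u, v}) := hdep.not_indep
        have hxuv : x ∉ ({u, v} : Set (Option α)) := by
          intro hmem
          rw [Set.insert_eq_self.2 hmem] at hnind
          exact hnind hpairind
        have henc : (insert x ({u, v} : Set (Option α))).encard = 3 := by
          rw [Set.encard_insert_of_notMem hxuv, Set.encard_pair huv]
          rfl
        have hexK : ∃ K', K' ∈ LinesN ∧ insert x {u, v} ⊆ K' := by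
          by_contra hno
          push_neg at hno
          refine hnind (hNInd.2 ⟨Set.insert_subset hxE (Set.pair_subset hu hv),
            by rw [henc], fun K' hK' hsub => absurd hsub (hno K' hK')⟩)
        obtain ⟨K', hK', hsubK'⟩ := hexK
        have hK'K0 : K' = K0 := huniq K' ⟨hK', hsubK' (by simp), hsubK' (by simp)⟩
        rw [hKK0, ← hK'K0]
        exact hsubK' (Set.mem_insert _ _)
      · rcases hx with rfl | rfl
        exacts [hK.2.1, hK.2.2]
    · intro hxK
      by_cases hxuv : x ∈ ({u, v} : Set (Option α))
      · exact Or.inr hxuv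
      left
      rw [Matroid.dep_iff]
      have hxE : x ∈ EN := hKsub K hK.1 hxK
      refine ⟨fun hind => ?_, Set.insert_subset hxE (Set.pair_subset hu hv)⟩
      have h2 := (hNInd.1 hind).2.2 K hK.1
        (Set.insert_subset hxK (Set.pair_subset hK.2.1 hK.2.2))
      rw [Set.encard_insert_of_notMem hxuv, Set.encard_pair huv] at h2
      norm_num at h2
  have hflat2 : ∀ F, N.IsFlat F → rk N F = 2 → ∃ K, K ∈ LinesN ∧ F = K := by
    intro F hF hrkF
    obtain ⟨I, hIind, hIF, hIcard, hIB⟩ :=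
      exists_basis_ncard_rk (show N.E.Finite from hENfin) hF.subset_ground
    rw [hrkF] at hIcard
    obtain ⟨u, v, huv, rfl⟩ := Set.ncard_eq_two.1 hIcard
    have huF : u ∈ F := hIF (by simp)
    have hvF : v ∈ F := hIF (by simp)
    have hu : u ∈ EN := hF.subset_ground huF
    have hv : v ∈ EN := hF.subset_ground hvF
    obtain ⟨K0, hK0, huniq⟩ := hP2 u v hu hv huv
    have hFeq : F = N.closure {u, v} :=
      line_eq_closure_pair (show N.E.Finite from hENfin) ⟨hF, hrkF⟩ hIind huv huF hvF
    rw [hFeq, hclosure_pair u v hu hv huv K0 hK0]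
    exact ⟨K0, hK0.1, rfl⟩
  have hlineN : ∀ L : Set (Option α), N.IsFlat L → rk N L = 2 → L.ncard = q + 1 := by
    intro L hF hrkF
    obtain ⟨K, hK, hFK⟩ := hflat2 L hF hrkF
    rw [hFK]
    exact hKcard K hK
  have hmeetN : ∀ L L' : Set (Option α), N.IsFlat L → rk N L = 2 → N.IsFlat L' → rk N L' = 2 →
      L ≠ L' → (L ∩ L').Nonempty := by
    intro L L' h1 h2 h3 h4 hne
    obtain ⟨K, hK, hFK⟩ := hflat2 L h1 h2
    obtain ⟨K', hK', hFK'⟩ := hflat2 L' h3 h4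
    rw [hFK, hFK']
    exact hmeet K hK K' hK' (by rw [← hFK, ← hFK']; exact hne)
  -- the isomorphism
  have hgroundeq : N.E \ {(none : Option α)} = some '' M.E := by
    rw [hNE, hEN, Set.insert_diff_self_of_notMem (by simp)]
  have hIso : Iso M (delete N {(none : Option α)}) := by
    refine ⟨some, (Option.some_injective α).injOn, ?_⟩
    apply Matroid.ext_indep
    · show some '' M.E = (N ↾ (N.E \ {(none : Option α)})).E
      rw [Matroid.restrict_ground_eq, hgroundeq]
    · intro I hI
      rw [Matroid.map_indep_iff]
      show _ ↔ (N ↾ (N.E \ {(none : Option α)})).Indep I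
      rw [Matroid.restrict_indep_iff, hgroundeq]
      constructor
      · rintro ⟨I0, hI0ind, rfl⟩
        have hI0E : I0 ⊆ M.E := hI0ind.subset_ground
        have hI0fin : I0.Finite := hE.subset hI0E
        have hencI0 : (some '' I0).encard = ↑I0.ncard := by
          rw [(Option.some_injective α).encard_image _, hI0fin.cast_ncard_eq]
        have hn3 : I0.ncard ≤ 3 := by
          have h := le_rk_of_indep hE hI0E hI0ind
          rwa [hrk] at h
        refine ⟨hNInd.2 ⟨(Set.image_mono hI0E).trans (Set.subset_insert _ _),
          by rw [hencI0]; exact_mod_cast hn3, fun K hK hsubK => ?_⟩,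
          Set.image_mono hI0E⟩
        obtain ⟨L, hL, hcase⟩ := hK
        have hI0L : I0 ⊆ L := by
          intro x hx
          rcases hcase with ⟨_, rfl⟩ | ⟨_, rfl⟩
          · exact hsome_mem _ _ (hsubK ⟨x, hx, rfl⟩)
          · exact hsome_mem' _ _ (hsubK ⟨x, hx, rfl⟩)
        have h2 := le_rk_of_indep hE hI0L hI0ind
        rw [hL.2] at h2
        rw [hencI0]
        exact_mod_cast h2
      · rintro ⟨hind, hIsub⟩
        have hIrange : I ⊆ Set.range some := hIsub.trans (Set.image_subset_range _ _)
        have hI0eq : I = some '' (some ⁻¹' I) :=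
          (Set.image_preimage_eq_of_subset hIrange).symm
        refine ⟨some ⁻¹' I, ?_, hI0eq⟩
        have hI0E : some ⁻¹' I ⊆ M.E := by
          intro a haI
          obtain ⟨b, hb, hba⟩ := hIsub haI
          rwa [← Option.some_injective α hba]
        have hI0fin : (some ⁻¹' I).Finite := hE.subset hI0E
        have hIN := hNInd.1 hind
        have hencI : I.encard = (some ⁻¹' I).encard := by
          nth_rewrite 1 [hI0eq]
          exact (Option.some_injective α).encard_image _
        rcases le_or_gt I.encard 2 with h2 | h2
        · exact indep_of_encard_le_two hs hI0E (by rw [← hencI]; exact h2)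
        · have h3 : I.encard = 3 := le_antisymm hIN.2.1 (by
            have := Order.add_one_le_of_lt h2
            norm_num at this
            exact this)
          have henc3 : (some ⁻¹' I).encard = 3 := by rw [← hencI, h3]
          rw [indep_three_iff_no_line hE hs hI0E henc3]
          rintro ⟨L, hL, hsubL⟩
          have hKmem : ∃ K, K ∈ LinesN ∧ I ⊆ K := by
            rcases hlines L hL.1 hL.2 with hc | hc
            · refine ⟨insert none (some '' L), ⟨L, hL, Or.inr ⟨hc, rfl⟩⟩, ?_⟩
              rw [hI0eq]
              exact (Set.image_mono hsubL).trans (Set.subset_insert _ _)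
            · refine ⟨some '' L, ⟨L, hL, Or.inl ⟨hc, rfl⟩⟩, ?_⟩
              rw [hI0eq]
              exact Set.image_mono hsubL
          obtain ⟨K, hK, hsubK⟩ := hKmem
          have := hIN.2.2 K hK hsubK
          rw [h3] at this
          norm_num at this
  exact ⟨N, none, ⟨hNsimple, hrkN, hNfin, hNcard, hlineN, hmeetN⟩,
    Set.mem_insert _ _, hIso⟩

end MatroidPaper
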